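/- Set η₀ = ∑_{j=1}^{k} (−1)^{k+j} c_j and η₁ = ∑_{j=1}^{k} (−1)^{k+j} j c_j. Then, as z → −1 with z ∉ (−∞, −1], g(z) − (1 − λ^k η₀ / s^{k+1/2}) (z+1)^{1/2} + (λ^k η₁ / s^{k+1/2}) (z+1)^{3/2} = O(|z+1|^{5/2}); that is, there exist δ, C > 0 such that the left-hand side is bounded by C|z+1|^{5/2} whenever 0 < |z+1| < δ and z ∉ (−∞, −1]. -/

import Mathlib

open Complex Set

/-- The generalized binomial coefficient `C(1/2, n) = (1/2)(1/2−1)⋯(1/2−n+1)/n!`. -/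
noncomputable def halfChoose (n : ℕ) : ℝ :=
  (∏ i ∈ Finset.range n, (1 / 2 - (i : ℝ))) / (Nat.factorial n)

/-- The g-function `g(z) = (z+1)^{1/2} (1 + (−1)^{k+1} (λ^k/s^{k+1/2}) ∑_{j=1}^k c_j z^{−j})`,
with the principal branch of `(z+1)^{1/2}`. -/
noncomputable def gFun (k : ℕ) (lam s : ℝ) (c : ℕ → ℝ) (z : ℂ) : ℂ :=
  (z + 1) ^ ((1 : ℂ) / 2) *
    (1 + ((-1 : ℂ)) ^ (k + 1) * ((lam ^ k : ℝ) : ℂ) / ((s ^ ((k : ℝ) + 1 / 2) : ℝ) : ℂ) *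
      ∑ j ∈ Finset.Icc 1 k, ((c j : ℝ) : ℂ) * z ^ (-(j : ℤ)))

/-! Write `w = z + 1`. Since `z = -(1 - w)`, each `z⁻ʲ` equals
`(-1)ʲ (1 - w)⁻ʲ = (-1)ʲ (1 + j w + O(w²))`, so the bracket in `g` is
`1 - λᵏη₀/s^(k+1/2) + (λᵏη₁/s^(k+1/2)) w + O(w²)`. Multiplying by `w^(1/2)` and using
`w^(3/2) = w · w^(1/2)` leaves an error of order `|w|^(5/2)`. -/

open Asymptotics Filter Topology

theorem inv_one_sub_pow_isBigO {𝕜 : Type*} [NormedField 𝕜] (j : ℕ) :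
    (fun w : 𝕜 => ((1 - w) ^ j)⁻¹ - 1 - j * w) =O[𝓝 0] fun w => w ^ 2 := by
  induction j with
  | zero => simpa using isBigO_zero _ _
  | succ j ih =>
    have hcont : ContinuousAt (fun w : 𝕜 => 1 - w) 0 := by fun_prop
    have hinv : (fun w : 𝕜 => (1 - w)⁻¹) =O[𝓝 0] fun _ => (1 : 𝕜) :=
      (hcont.inv₀ (by simp)).isBigO_one 𝕜
    have hsq : (fun w : 𝕜 => (j + 1 : 𝕜) * w ^ 2) =O[𝓝 0] fun w => w ^ 2 :=
      isBigO_const_mul_self _ _ _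
    -- `(1 - w)^-(j+1) - 1 - (j+1) w = ((1 - w)^-j - 1 - j w + (j+1) w²) / (1 - w)`
    refine ((ih.add hsq).mul hinv).congr' ?_ (by simp)
    filter_upwards [hcont.eventually_ne (by simp : (1 : 𝕜) - 0 ≠ 0)] with w hw
    push_cast
    field_simp
    ring

theorem cpow_three_halves_eq (w : ℂ) : w ^ (3 / 2 : ℂ) = w * w ^ (1 / 2 : ℂ) := by
  rcases eq_or_ne w 0 with rfl | hw
  · simp
  · rw [show (3 / 2 : ℂ) = 1 + 1 / 2 by norm_num, Complex.cpow_add _ _ hw, Complex.cpow_one]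

theorem norm_cpow_half_mul_sq (w : ℂ) :
    ‖w ^ (1 / 2 : ℂ) * w ^ 2‖ = ‖w‖ ^ (5 / 2 : ℝ) := by
  rw [norm_mul, show (1 / 2 : ℂ) = ((1 / 2 : ℝ) : ℂ) by norm_num, Complex.norm_cpow_real,
    norm_pow, show (5 / 2 : ℝ) = 1 / 2 + (2 : ℕ) by norm_num,
    Real.rpow_add' (norm_nonneg w) (by norm_num), Real.rpow_natCast]

theorem zpow_neg_natCast_eq_neg_one_pow_mul_inv (z : ℂ) (j : ℕ) :
    z ^ (-(j : ℤ)) = (-1) ^ j * ((1 - (z + 1)) ^ j)⁻¹ := by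
  rw [zpow_neg, zpow_natCast, show 1 - (z + 1) = -1 * z by ring, mul_pow, mul_inv,
    mul_inv_cancel_left₀ (by simp)]

theorem gFun_sub_expansion_eq (k : ℕ) (lam s : ℝ) (c : ℕ → ℝ) (z : ℂ) :
    gFun k lam s c z
      - (((1 - lam ^ k * (∑ j ∈ Finset.Icc 1 k, (-1 : ℝ) ^ (k + j) * c j)
          / s ^ ((k : ℝ) + 1 / 2) : ℝ)) : ℂ) * (z + 1) ^ ((1 : ℂ) / 2)
      + (((lam ^ k * (∑ j ∈ Finset.Icc 1 k, (-1 : ℝ) ^ (k + j) * j * c j)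
          / s ^ ((k : ℝ) + 1 / 2) : ℝ)) : ℂ) * (z + 1) ^ ((3 : ℂ) / 2)
    = (z + 1) ^ ((1 : ℂ) / 2) *
        ((-1) ^ (k + 1) * ((lam ^ k / s ^ ((k : ℝ) + 1 / 2) : ℝ) : ℂ) * ∑ j ∈ Finset.Icc 1 k,
          (-1) ^ j * (c j : ℂ) * (((1 - (z + 1)) ^ j)⁻¹ - 1 - j * (z + 1))) := by
  rw [gFun, cpow_three_halves_eq]
  push_cast
  set L : ℂ := (lam : ℂ) ^ k
  set S : ℂ := ((s ^ ((k : ℝ) + 1 / 2) : ℝ) : ℂ)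
  have hbracket : (-1) ^ (k + 1) * L / S * ∑ j ∈ Finset.Icc 1 k, (c j : ℂ) * z ^ (-(j : ℤ))
      + L * (∑ j ∈ Finset.Icc 1 k, (-1) ^ (k + j) * (c j : ℂ)) / S
      + L * (∑ j ∈ Finset.Icc 1 k, (-1) ^ (k + j) * (j : ℂ) * c j) / S * (z + 1)
      = (-1) ^ (k + 1) * (L / S) * ∑ j ∈ Finset.Icc 1 k,
          (-1) ^ j * (c j : ℂ) * (((1 - (z + 1)) ^ j)⁻¹ - 1 - j * (z + 1)) := by
    simp only [Finset.mul_sum, Finset.sum_div, Finset.sum_mul, ← Finset.sum_add_distrib]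
    refine Finset.sum_congr rfl fun j _ => ?_
    rw [zpow_neg_natCast_eq_neg_one_pow_mul_inv]
    ring
  linear_combination (z + 1) ^ ((1 : ℂ) / 2) * hbracket

theorem gFun_expansion_at_minus_one (k : ℕ) (lam s : ℝ) (c : ℕ → ℝ) (η0 η1 : ℝ)
    (hη0 : η0 = ∑ j ∈ Finset.Icc 1 k, (-1 : ℝ) ^ (k + j) * c j)
    (hη1 : η1 = ∑ j ∈ Finset.Icc 1 k, (-1 : ℝ) ^ (k + j) * j * c j) :
    ∃ δ > (0 : ℝ), ∃ C > (0 : ℝ), ∀ z : ℂ,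
      0 < ‖z + 1‖ → ‖z + 1‖ < δ →
      ¬(z.im = 0 ∧ z.re ≤ -1) →
      ‖gFun k lam s c z
          - (((1 - lam ^ k * η0 / s ^ ((k : ℝ) + 1 / 2) : ℝ)) : ℂ) * (z + 1) ^ ((1 : ℂ) / 2)
          + (((lam ^ k * η1 / s ^ ((k : ℝ) + 1 / 2) : ℝ)) : ℂ) * (z + 1) ^ ((3 : ℂ) / 2)‖
        ≤ C * (‖z + 1‖) ^ ((5 : ℝ) / 2) := by
  subst hη0 hη1
  have hw : Tendsto (fun z : ℂ => z + 1) (𝓝 (-1)) (𝓝 0) := by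
    simpa using (continuous_add_const (1 : ℂ)).tendsto (-1)
  have hE : (fun z : ℂ => ∑ j ∈ Finset.Icc 1 k,
      (-1) ^ j * (c j : ℂ) * (((1 - (z + 1)) ^ j)⁻¹ - 1 - j * (z + 1))) =O[𝓝 (-1)]
      fun z => (z + 1) ^ 2 :=
    IsBigO.fun_sum fun j _ => ((inv_one_sub_pow_isBigO j).comp_tendsto hw).const_mul_left _
  obtain ⟨C, hC, hCw⟩ := ((isBigO_refl (fun z : ℂ => (z + 1) ^ ((1 : ℂ) / 2)) _).mul
    (hE.const_mul_left ((-1) ^ (k + 1) * ((lam ^ k / s ^ ((k : ℝ) + 1 / 2) : ℝ) : ℂ))))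
    |>.exists_pos
  obtain ⟨δ, hδ, hball⟩ := Metric.eventually_nhds_iff.mp hCw.bound
  refine ⟨δ, hδ, C, hC, fun z _ hzδ _ => ?_⟩
  rw [gFun_sub_expansion_eq, ← norm_cpow_half_mul_sq]
  exact hball (by rwa [dist_eq_norm, sub_neg_eq_add])
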